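/- Consider the semi-discrete scheme du_i/dt = −(f_{i+1/2} − f_{i−1/2})/Δx with periodic indices and flux f_{i+1/2} = (u_i² + u_i u_{i+1} + u_{i+1}²)/6. Then the discrete energy Σ_i u_i² is conserved: d/dt Σ_i u_i(t)² = 0 along any solution. -/

import Mathlib

lemma fin_sum_shift {n : ℕ} [NeZero n] (g : Fin n → ℝ) :
    ∑ i : Fin n, g (i + 1) = ∑ i : Fin n, g i := by
  exact Fintype.sum_equiv (Equiv.addRight (1 : Fin n)) _ _ (fun i => rfl)

/-- Energy conservation (Jameson) for the semi-discrete Burgers scheme with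
flux `f_{i+1/2} = (u_i² + u_i u_{i+1} + u_{i+1}²)/6` on a periodic grid:
the discrete energy `∑ i, u i ²` has zero time-derivative. -/
theorem burgers_scheme_conserves_energy
    (n : ℕ) [NeZero n] (Δx : ℝ) (hΔx : 0 < Δx)
    (u : ℝ → Fin n → ℝ)
    (hODE : ∀ t : ℝ, ∀ i : Fin n,
      HasDerivAt (fun s => u s i)
        (-(((u t i) ^ 2 + u t i * u t (i + 1) + (u t (i + 1)) ^ 2) / 6 -
            ((u t (i - 1)) ^ 2 + u t (i - 1) * u t i + (u t i) ^ 2) / 6) / Δx) t) :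
    ∀ t : ℝ, HasDerivAt (fun s => ∑ i : Fin n, (u s i) ^ 2) 0 t := by
  intro t
  set F : Fin n → ℝ := fun i =>
    ((u t i) ^ 2 + u t i * u t (i + 1) + (u t (i + 1)) ^ 2) / 6 with hF
  have hd : HasDerivAt (fun s => ∑ i : Fin n, (u s i) ^ 2)
      (∑ i : Fin n, 2 * u t i * (-(F i - F (i - 1)) / Δx)) t := by
    apply HasDerivAt.fun_sum
    intro i _
    have := (hODE t i).fun_pow 2
    have heq : F (i - 1)
        = ((u t (i - 1)) ^ 2 + u t (i - 1) * u t i + (u t i) ^ 2) / 6 := by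
      simp [hF, sub_add_cancel]
    rw [heq]
    convert this using 1
    · rfl
    push_cast
    ring
  have hzero : (∑ i : Fin n, 2 * u t i * (-(F i - F (i - 1)) / Δx)) = 0 := by
    have h1 : ∑ i : Fin n, 2 * u t i * (-(F i - F (i - 1)) / Δx)
        = (-2 / Δx) * ((∑ i : Fin n, u t i * F i) - ∑ i : Fin n, u t i * F (i - 1)) := by
      rw [← Finset.sum_sub_distrib, Finset.mul_sum]
      apply Finset.sum_congr rfl
      intro i _
      field_simp
    have h2 : (∑ i : Fin n, u t i * F (i - 1)) = ∑ i : Fin n, u t (i + 1) * F i := by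
      rw [← fin_sum_shift (fun i => u t i * F (i - 1))]
      simp [add_sub_cancel_right]
    have h3 : (∑ i : Fin n, u t i * F i) - (∑ i : Fin n, u t (i + 1) * F i)
        = (∑ i : Fin n, (u t i) ^ 3 / 6) - ∑ i : Fin n, (u t (i + 1)) ^ 3 / 6 := by
      rw [← Finset.sum_sub_distrib, ← Finset.sum_sub_distrib]
      apply Finset.sum_congr rfl
      intro i _
      simp only [hF]
      ring
    have h4 : (∑ i : Fin n, (u t (i + 1)) ^ 3 / 6) = ∑ i : Fin n, (u t i) ^ 3 / 6 :=
      fin_sum_shift (fun i => (u t i) ^ 3 / 6)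
    rw [h1, h2, h3, h4, sub_self, mul_zero]
  rwa [hzero] at hd
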